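/- arXiv:1911.12525 — 2 statements merged into one kernel-verified Lean document; each statement's English description precedes it below -/
import Mathlib

section
/- Assume k ≤ n − 3 and let λ : {1,…,n} × {0,1} → F be injective. Let R ⊆ {3,…,n} be a set with |R| = k + 1. If c and c' are codewords of C(n,k,2,3,λ) such that c(i,1,a) + c(i,3,a(2,a_2⊕1)) = c'(i,1,a) + c'(i,3,a(2,a_2⊕1)) for every i ∈ R and every a ∈ {0,1}^n, then: (1) c(2,b,a) = c'(2,b,a) for every b ∈ {1,3} and every a ∈ {0,1}^n, and (2) c(1,1,a) + c(1,3,a(2,a_2⊕1)) = c'(1,1,a) + c'(1,3,a(2,a_2⊕1)) for every a ∈ {0,1}^n. -/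
/-!
Pass to the difference `d = c - c'`. Adding the parity checks of layer 1 at `a` and of layer 3
at `a' = a(2, a₂ ⊕ 1)` gives one relation `∑ₚ λ(p)^t w(p) = 0`, `t < n - k`, indexed by pairs
`p = (i, u)`: at every node `i ≠ 2` both layers use the evaluation point `λ(i, aᵢ)`, while at
node 2 they use the two distinct points `λ(2, a₂)` and `λ(2, a₂ ⊕ 1)`. On `R` the coefficient
is a downloaded sum of `d`, hence zero, so at most `(n - k - 1) + 1 = n - k` coefficients
survive, at distinct points, and the Vandermonde determinant forces all of them to vanish.
-/

/-- Node `i` of the paper is `i - 1 : Fin n`; the layer index `b` is a natural number, and only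
the layers `b ∈ {1,…,m}` are constrained. -/
def IsCodeword {F : Type*} [Field F] {n : ℕ} (k s m : ℕ)
    (lam : Fin n → Fin s → F) (c : Fin n → ℕ → (Fin n → Fin s) → F) : Prop :=
  ∀ t < n - k, ∀ b ∈ Finset.Icc 1 m, ∀ a : Fin n → Fin s,
    ∑ i, lam i (a i) ^ t * c i b a = 0

open Finset Function

theorem eq_zero_of_forall_sum_pow_mul_eq_zero {R ι : Type*} [CommRing R] [IsDomain R]
    [Fintype ι] {x v : ι → R} {S : Finset ι} (hx : Set.InjOn x S) (hv : ∀ i ∉ S, v i = 0)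
    (h : ∀ t < #S, ∑ i, x i ^ t * v i = 0) : v = 0 := by
  have hS : ∀ t < #S, ∑ i ∈ S, v i * x i ^ t = 0 := fun t ht => by
    rw [← h t ht, sum_subset (subset_univ S) fun i _ hi => by simp [hv i hi]]
    simp_rw [mul_comm]
  let e := S.equivFin
  have hzero := Matrix.eq_zero_of_forall_pow_sum_mul_pow_eq_zero
    (f := fun j => x (e.symm j)) (v := fun j => v (e.symm j))
    (fun j₁ j₂ h => e.symm.injective (Subtype.ext (hx (e.symm j₁).2 (e.symm j₂).2 h)))
    fun t => by
      rw [Equiv.sum_comp e.symm (fun i : S => v i * x i ^ (t : ℕ))]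
      exact (sum_coe_sort S _).trans (hS t t.2)
  funext i
  by_cases hi : i ∈ S
  · simpa [e] using congrFun hzero (e ⟨i, hi⟩)
  · exact hv i hi

namespace IsCodeword

variable {F : Type*} [Field F] {n k s m : ℕ} {lam : Fin n → Fin s → F}
  {c c' : Fin n → ℕ → (Fin n → Fin s) → F}

theorem sub (hc : IsCodeword k s m lam c) (hc' : IsCodeword k s m lam c') :
    IsCodeword k s m lam (c - c') := fun t ht b hb a => by
  simp only [Pi.sub_apply, mul_sub, sum_sub_distrib, hc t ht b hb a, hc' t ht b hb a, sub_self]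

/-- The coefficient of `λ(i,u)^t` in the sum of the parity checks of layer `b` at `a` and of
layer `b'` at `a'`. -/
def mergedCoeff (c : Fin n → ℕ → (Fin n → Fin s) → F) (b b' : ℕ) (a a' : Fin n → Fin s)
    (p : Fin n × Fin s) : F :=
  (if p.2 = a p.1 then c p.1 b a else 0) + (if p.2 = a' p.1 then c p.1 b' a' else 0)

theorem sum_pow_mul_mergedCoeff_eq_zero (hc : IsCodeword k s m lam c) {b b' : ℕ}
    (hb : b ∈ Icc 1 m) (hb' : b' ∈ Icc 1 m) (a a' : Fin n → Fin s) {t : ℕ} (ht : t < n - k) :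
    ∑ p : Fin n × Fin s, lam p.1 p.2 ^ t * mergedCoeff c b b' a a' p = 0 := by
  simp only [mergedCoeff, Fintype.sum_prod_type, mul_add, sum_add_distrib, mul_ite, mul_zero,
    sum_ite_eq', mem_univ, if_true, hc t ht b hb a, hc t ht b' hb' a', add_zero]

theorem eq_zero_of_downloaded_sums_eq_zero (hc : IsCodeword k s m lam c)
    (hlam : Injective fun p : Fin n × Fin s => lam p.1 p.2) {b b' : ℕ} (hb : b ∈ Icc 1 m)
    (hb' : b' ∈ Icc 1 m) {j : Fin n} {a : Fin n → Fin s} {u : Fin s} (hu : u ≠ a j)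
    {R : Finset (Fin n)} (hjR : j ∉ R) (hRcard : k + 1 ≤ #R)
    (hR : ∀ i ∈ R, c i b a + c i b' (update a j u) = 0) :
    c j b a = 0 ∧ c j b' (update a j u) = 0 ∧
      ∀ i ≠ j, c i b a + c i b' (update a j u) = 0 := by
  set a' := update a j u
  set S : Finset (Fin n × Fin s) := (Rᶜ).image (fun i => (i, a i)) ∪ {(j, u)}
  have hS : #S ≤ n - k := by
    have hRn : #R ≤ n := by simpa using card_le_univ R
    calc #S ≤ #Rᶜ + 1 := (card_union_le _ _).trans (Nat.add_le_add_right card_image_le _)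
      _ ≤ n - k := by rw [card_compl, Fintype.card_fin]; omega
  have hsupp : ∀ p ∉ S, mergedCoeff c b b' a a' p = 0 := by
    rintro ⟨i, w⟩ hp
    simp only [S, mem_union, mem_image, mem_compl, mem_singleton, Prod.mk.injEq] at hp
    by_cases hi : i ∈ R
    · have hij : i ≠ j := fun h => hjR (h ▸ hi)
      by_cases hw : w = a i
      · subst hw
        simpa [mergedCoeff, a', update_of_ne hij] using hR i hi
      · simp [mergedCoeff, a', update_of_ne hij, hw]
    · have hwa : w ≠ a i := fun hw => hp (Or.inl ⟨i, hi, rfl, hw.symm⟩)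
      have hwa' : w ≠ a' i := by
        rcases eq_or_ne i j with rfl | hij
        · simpa [a'] using fun hw => hp (Or.inr ⟨rfl, hw⟩)
        · simpa [a', update_of_ne hij] using hwa
      simp [mergedCoeff, hwa, hwa']
  have hzero : mergedCoeff c b b' a a' = 0 :=
    eq_zero_of_forall_sum_pow_mul_eq_zero hlam.injOn hsupp fun t ht =>
      sum_pow_mul_mergedCoeff_eq_zero hc hb hb' a a' (ht.trans_le hS)
  refine ⟨?_, ?_, fun i hij => ?_⟩
  · simpa [mergedCoeff, a', hu.symm] using congrFun hzero (j, a j)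
  · simpa [mergedCoeff, a', hu] using congrFun hzero (j, u)
  · simpa [mergedCoeff, a', update_of_ne hij] using congrFun hzero (i, a i)

end IsCodeword

theorem stmt_4_general {F : Type*} [Field F] (n k : ℕ)
    (lam : Fin n → Fin 2 → F)
    (hlam : Function.Injective fun p : Fin n × Fin 2 => lam p.1 p.2)
    (i1 i2 : Fin n) (hi1 : (i1 : ℕ) = 0) (hi2 : (i2 : ℕ) = 1)
    (R : Finset (Fin n)) (hR : ∀ i ∈ R, 2 ≤ (i : ℕ)) (hRcard : R.card = k + 1)
    (c c' : Fin n → ℕ → (Fin n → Fin 2) → F)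
    (hc : IsCodeword k 2 3 lam c) (hc' : IsCodeword k 2 3 lam c')
    (heq : ∀ i ∈ R, ∀ a : Fin n → Fin 2,
      c i 1 a + c i 3 (Function.update a i2 (a i2 + 1))
        = c' i 1 a + c' i 3 (Function.update a i2 (a i2 + 1))) :
    (∀ b ∈ ({1, 3} : Finset ℕ), ∀ a : Fin n → Fin 2, c i2 b a = c' i2 b a) ∧
    (∀ a : Fin n → Fin 2,
      c i1 1 a + c i1 3 (Function.update a i2 (a i2 + 1))
        = c' i1 1 a + c' i1 3 (Function.update a i2 (a i2 + 1))) := by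
  have hflip : ∀ u : Fin 2, u + 1 ≠ u := by decide
  have hflip_flip : ∀ u : Fin 2, u + 1 + 1 = u := by decide
  have hrepair (a : Fin n → Fin 2) :=
    (hc.sub hc').eq_zero_of_downloaded_sums_eq_zero hlam (b := 1) (b' := 3) (by decide)
    (by decide) (hflip (a i2)) (fun h => by have := hR i2 h; omega) hRcard.ge
    fun i hi => by simp only [Pi.sub_apply]; linear_combination heq i hi a
  refine ⟨fun b hb a => ?_, fun a => ?_⟩
  · rcases (by simpa using hb : b = 1 ∨ b = 3) with rfl | rfl
    · exact sub_eq_zero.1 (hrepair a).1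
    · have h := (hrepair (update a i2 (a i2 + 1))).2.1
      rw [update_idem, update_self, hflip_flip, update_eq_self] at h
      exact sub_eq_zero.1 h
  · have h := (hrepair a).2.2 i1 (Fin.ne_of_val_ne (by omega))
    simp only [Pi.sub_apply] at h
    linear_combination h

/-- first-round recovery at node 2 in `C(n,k,2,3,λ)`.  Nodes 1 and 2
of the paper are `i1, i2 : Fin n` with indices `0, 1`; the helper set
`R ⊆ {3,…,n}` consists of nodes with index `≥ 2`, and `|R| = k+1`.  If the
downloaded sums `c(i,1,a) + c(i,3,a(2,a₂⊕1))` for `i ∈ R` agree for two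
codewords, then (1) the coordinates `(2,b,a)`, `b ∈ {1,3}`, agree, and (2) the
sums at node 1 agree. -/
theorem stmt_4 {F : Type*} [Field F] (n k : ℕ) (hk : 1 ≤ k) (hkn : k + 3 ≤ n)
    (lam : Fin n → Fin 2 → F)
    (hlam : Function.Injective fun p : Fin n × Fin 2 => lam p.1 p.2)
    (i1 i2 : Fin n) (hi1 : (i1 : ℕ) = 0) (hi2 : (i2 : ℕ) = 1)
    (R : Finset (Fin n)) (hR : ∀ i ∈ R, 2 ≤ (i : ℕ)) (hRcard : R.card = k + 1)
    (c c' : Fin n → ℕ → (Fin n → Fin 2) → F)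
    (hc : IsCodeword k 2 3 lam c) (hc' : IsCodeword k 2 3 lam c')
    (heq : ∀ i ∈ R, ∀ a : Fin n → Fin 2,
      c i 1 a + c i 3 (Function.update a i2 (a i2 + 1))
        = c' i 1 a + c' i 3 (Function.update a i2 (a i2 + 1))) :
    (∀ b ∈ ({1, 3} : Finset ℕ), ∀ a : Fin n → Fin 2, c i2 b a = c' i2 b a) ∧
    (∀ a : Fin n → Fin 2,
      c i1 1 a + c i1 3 (Function.update a i2 (a i2 + 1))
        = c' i1 1 a + c' i1 3 (Function.update a i2 (a i2 + 1))) :=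
  stmt_4_general n k lam hlam i1 i2 hi1 hi2 R hR hRcard c c' hc hc' heq
end

section
/- Let h ≥ 2 and s ≥ 1, set d := k + s − 1 and m := s + h − 1, assume h + d ≤ n, and let λ : {1,…,n} × {0,…,s−1} → F be injective. Let 𝓕, 𝓡 ⊆ {1,…,n} be disjoint sets with |𝓕| = h and |𝓡| = d. Then there exist functions φ_j : N → M^h for each j ∈ 𝓡 and a function ρ : (𝓡 → M^h) → (𝓕 → N) such that for every codeword c of C(n,k,s,m,λ), ρ( (j ↦ φ_j(c_j)) ) = (u ↦ c_u), where c_i ∈ N denotes the i-th node (b,a) ↦ c(i,b,a). Since each helper node transmits h·s^n symbols of F, the total download is h·d·s^n symbols, which meets the centralized cut-set bound |𝓕||𝓡|·l / (|𝓕|+|𝓡|−k) with equality for node size l = (d+h−k)·s^n; in other words, the code C(n,k,s,m,λ) achieves the optimal repair bandwidth under the centralized model. -/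
open Finset Function

section Polynomials

variable {F : Type*} [Field F]

theorem eq_zero_of_forall_lt_card_sum_pow_mul_eq_zero {ι : Type*} [Fintype ι] {x v : ι → F}
    (hx : Injective x) (hv : ∀ t < Fintype.card ι, ∑ i, x i ^ t * v i = 0) : v = 0 := by
  let e := Fintype.equivFin ι
  have hve : v ∘ e.symm = 0 :=
    Matrix.eq_zero_of_forall_pow_sum_mul_pow_eq_zero (hx.comp e.symm.injective) fun t => by
      rw [← hv t t.2, ← e.symm.sum_comp]
      simp only [comp_apply, mul_comm]
  ext i
  simpa using congrFun hve (e i)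

open Polynomial in
theorem eq_zero_of_forall_sum_mul_pow_eq_const {ι : Type*} [Fintype ι] {x : ι → F}
    (hx : Injective x) {S : Finset ℕ} {e : ℕ → ℕ} (he : Set.InjOn e S)
    (hpos : ∀ b ∈ S, 0 < e b) (hlt : ∀ b ∈ S, e b < Fintype.card ι) {g : ℕ → F} {K : F}
    (hK : ∀ i, ∑ b ∈ S, g b * x i ^ e b = K) : ∀ b ∈ S, g b = 0 := by
  intro b hb
  set p : F[X] := ∑ b ∈ S, C (g b) * X ^ e b
  have hdeg : p.natDegree ≤ Fintype.card ι - 1 :=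
    natDegree_sum_le_of_forall_le _ _ fun b' hb' =>
      (natDegree_C_mul_X_pow_le _ _).trans (Nat.le_sub_one_of_lt (hlt b' hb'))
  have hp : p = C K := by
    refine eq_of_natDegree_lt_card_of_eval_eq p (C K) hx (fun i => ?_) ?_
    · simp [p, eval_finsetSum, hK]
    · have := hlt b hb
      rw [natDegree_C]
      omega
  have hcoeff := congrArg (coeff · (e b)) hp
  simp only [p, finsetSum_coeff, coeff_C_mul_X_pow, coeff_C, (hpos b hb).ne', if_false] at hcoeff
  rwa [sum_eq_single_of_mem b hb fun b' hb' hne => if_neg fun h => hne (he hb' hb h.symm),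
    if_pos rfl] at hcoeff

theorem exists_ne_zero_one_add_ne_zero {ι : Type*} [Fintype ι] {x : ι → F} (hx : Injective x)
    (hι : 3 ≤ Fintype.card ι) : ∃ c : F, c ≠ 0 ∧ 1 + c ≠ 0 := by
  classical
  obtain ⟨c, -, hc⟩ := exists_mem_notMem_of_card_lt_card (s := {0, -1}) (t := univ.image x) <| by
    rw [card_image_of_injective _ hx, card_univ]
    exact (card_le_two).trans_lt hι
  simp only [mem_insert, mem_singleton, not_or] at hc
  exact ⟨c, hc.1, fun h => hc.2 (by linear_combination h)⟩

end Polynomials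

section RepairCode

variable {F : Type*} [Field F] {n s k m : ℕ} {lam : Fin n → Fin s → F}
  {c c' : Fin n → ℕ → (Fin n → Fin s) → F}

theorem IsCodeword.sub_s15 (hc : IsCodeword k s m lam c) (hc' : IsCodeword k s m lam c') :
    IsCodeword k s m lam (c - c') := fun t ht b hb a => by
  simp only [Pi.sub_apply, mul_sub, sum_sub_distrib, hc t ht b hb a, hc' t ht b hb a, sub_zero]

def lineCombination (m : ℕ) (w : Fin s → ℕ → F) (u : Fin n) (f : ℕ → (Fin n → Fin s) → F)
    (a : Fin n → Fin s) : F :=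
  ∑ x, ∑ b ∈ Icc 1 m, w x b * f b (update a u x)

theorem lineCombination_update (w : Fin s → ℕ → F) (u : Fin n) (f : ℕ → (Fin n → Fin s) → F)
    (a : Fin n → Fin s) (y : Fin s) :
    lineCombination m w u f (update a u y) = lineCombination m w u f a := by
  simp only [lineCombination, update_idem]

theorem lineCombination_sub (w : Fin s → ℕ → F) (u : Fin n) (f g : ℕ → (Fin n → Fin s) → F)
    (a : Fin n → Fin s) :
    lineCombination m w u (f - g) a = lineCombination m w u f a - lineCombination m w u g a := by
  simp only [lineCombination, Pi.sub_apply, mul_sub, sum_sub_distrib]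

theorem IsCodeword.sum_pow_mul_lineCombination_eq_zero (hc : IsCodeword k s m lam c)
    (w : Fin s → ℕ → F) (u : Fin n) (a : Fin n → Fin s) {t : ℕ} (ht : t < n - k) :
    ∑ x, lam u x ^ t * ∑ b ∈ Icc 1 m, w x b * c u b (update a u x) +
      ∑ i ∈ {u}ᶜ, lam i (a i) ^ t * lineCombination m w u (c i) a = 0 := by
  set G : Fin n → F := fun i => ∑ x, ∑ b ∈ Icc 1 m,
    w x b * (lam i (update a u x i) ^ t * c i b (update a u x))
  have hG : ∑ i, G i = 0 := by
    rw [sum_comm]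
    refine sum_eq_zero fun x _ => ?_
    rw [sum_comm]
    exact sum_eq_zero fun b hb => by rw [← mul_sum, hc t ht b hb, mul_zero]
  rw [← hG, Fintype.sum_eq_add_sum_compl u]
  congr 1
  · simp only [G, update_self, mul_sum]
    exact sum_congr rfl fun x _ => sum_congr rfl fun b _ => by ring
  · refine sum_congr rfl fun i hi => ?_
    simp only [G, lineCombination, mul_sum, update_of_ne (mem_compl.1 hi ∘ mem_singleton.2)]
    exact sum_congr rfl fun x _ => sum_congr rfl fun b _ => by ring

theorem IsCodeword.lineCombination_eq_zero (hlam : Injective2 lam) (hc : IsCodeword k s m lam c)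
    {R : Finset (Fin n)} {u : Fin n} (hu : u ∉ R) (hR : k + s ≤ #R + 1) (w : Fin s → ℕ → F)
    (a : Fin n → Fin s) (hR0 : ∀ j ∈ R, lineCombination m w u (c j) a = 0) :
    (∀ x, ∑ b ∈ Icc 1 m, w x b * c u b (update a u x) = 0) ∧
      ∀ i ∉ insert u R, lineCombination m w u (c i) a = 0 := by
  set S := (insert u R)ᶜ
  let pts : S ⊕ Fin s → F := Sum.elim (fun i => lam i (a i)) (lam u)
  let v : S ⊕ Fin s → F := Sum.elim (fun i => lineCombination m w u (c i) a)
    fun x => ∑ b ∈ Icc 1 m, w x b * c u b (update a u x)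
  have hpts : Injective pts := by
    rintro (⟨i, hi⟩ | x) (⟨i', hi'⟩ | x') h <;> simp only [pts, Sum.elim_inl, Sum.elim_inr] at h
    · simp [(hlam h).1]
    · exact absurd (hlam h).1 (by simp_all [S])
    · exact absurd (hlam h).1.symm (by simp_all [S])
    · simp [(hlam h).2]
  have hcard : Fintype.card (S ⊕ Fin s) ≤ n - k := by
    have := card_le_univ (insert u R)
    simp only [Fintype.card_sum, Fintype.card_coe, Fintype.card_fin, S, card_compl,
      card_insert_of_notMem hu] at this ⊢
    omega
  have hsum : ∀ t < n - k, ∑ p, pts p ^ t * v p = 0 := fun t ht => by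
    rw [← hc.sum_pow_mul_lineCombination_eq_zero w u a ht, Fintype.sum_sum_type, add_comm]
    congr 1
    refine (sum_coe_sort S fun i => lam i (a i) ^ t * lineCombination m w u (c i) a).trans
      (sum_subset (fun i hi => by simp_all [S]) fun j _ hj => ?_)
    rw [hR0 j (by simp_all [S]), mul_zero]
  have hv := eq_zero_of_forall_lt_card_sum_pow_mul_eq_zero hpts fun t ht =>
    hsum t (ht.trans_le hcard)
  exact ⟨fun x => congrFun hv (.inr x), fun i hi => congrFun hv (.inl ⟨i, mem_compl.2 hi⟩)⟩

variable [NeZero s]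

def repairCoeff (lam : Fin n → Fin s → F) (u : Fin n) (r b : ℕ) : F :=
  (if b = r + 1 then 1 else 0) - if s < b then lam u 0 ^ (b - s) else 0

def tailSum (m : ℕ) (lam : Fin n → Fin s → F) (u : Fin n) (f : ℕ → (Fin n → Fin s) → F)
    (a : Fin n → Fin s) : F :=
  ∑ b ∈ Ioc s m, lam u 0 ^ (b - s) * f b a

theorem sum_repairCoeff_mul {r : ℕ} (hr : r < s) (hsm : s ≤ m) (u : Fin n)
    (f : ℕ → (Fin n → Fin s) → F) (a : Fin n → Fin s) :
    ∑ b ∈ Icc 1 m, repairCoeff lam u r b * f b a = f (r + 1) a - tailSum m lam u f a := by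
  have hIoc : (Icc 1 m).filter (s < ·) = Ioc s m := by
    ext b
    simp only [mem_filter, mem_Icc, mem_Ioc]
    omega
  simp only [repairCoeff, sub_mul, ite_mul, one_mul, zero_mul, sum_sub_distrib,
    sum_ite_eq', ← sum_filter, hIoc, tailSum]
  rw [if_pos (mem_Icc.2 ⟨by omega, by omega⟩)]

def repairWeight (c₀ : F) (lam : Fin n → Fin s → F) (u : Fin n) (r : ℕ) (x : Fin s) (b : ℕ) : F :=
  repairCoeff lam u r b + c₀ * lam u x ^ r * repairCoeff lam u 0 b

theorem sum_repairWeight_mul {r : ℕ} (hr : r < s) (hsm : s ≤ m) (c₀ : F) (u : Fin n) (x : Fin s)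
    (f : ℕ → (Fin n → Fin s) → F) (a : Fin n → Fin s) :
    ∑ b ∈ Icc 1 m, repairWeight c₀ lam u r x b * f b a =
      (f (r + 1) a - tailSum m lam u f a) + c₀ * lam u x ^ r * (f 1 a - tailSum m lam u f a) := by
  simp only [repairWeight, add_mul, sum_add_distrib, mul_assoc, ← mul_sum,
    sum_repairCoeff_mul hr hsm, sum_repairCoeff_mul (NeZero.pos s) hsm, zero_add]

def repairDownload (m : ℕ) (c₀ : F) (lam : Fin n → Fin s → F) (u : Fin n)
    (f : ℕ → (Fin n → Fin s) → F) (a : Fin n → Fin s) : F :=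
  lineCombination m (repairWeight c₀ lam u (a u)) u f a

theorem repairDownload_update (c₀ : F) (u : Fin n) (f : ℕ → (Fin n → Fin s) → F)
    (a : Fin n → Fin s) (y : Fin s) :
    repairDownload m c₀ lam u f (update a u y) =
      lineCombination m (repairWeight c₀ lam u y) u f a := by
  rw [repairDownload, update_self, lineCombination_update]

theorem repairDownload_sub (c₀ : F) (u : Fin n) (f g : ℕ → (Fin n → Fin s) → F) :
    repairDownload m c₀ lam u (f - g) =
      repairDownload m c₀ lam u f - repairDownload m c₀ lam u g := by
  ext a
  exact lineCombination_sub _ _ _ _ _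

theorem IsCodeword.lineCombination_repairWeight_eq_zero (hlam : Injective2 lam)
    (hc : IsCodeword k s m lam c) {R Fs : Finset (Fin n)} (hdisj : Disjoint Fs R)
    (hR : k + s ≤ #R + 1) {c₀ : F}
    (hdl : ∀ j ∈ R, ∀ u ∈ Fs, ∀ a, repairDownload m c₀ lam u (c j) a = 0)
    {u : Fin n} (hu : u ∈ Fs) ⦃r : ℕ⦄ (hr : r < s) (a : Fin n → Fin s) :
    (∀ x, ∑ b ∈ Icc 1 m, repairWeight c₀ lam u r x b * c u b (update a u x) = 0) ∧
      ∀ i ∉ insert u R, lineCombination m (repairWeight c₀ lam u r) u (c i) a = 0 :=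
  hc.lineCombination_eq_zero hlam (disjoint_left.1 hdisj hu) hR _ a fun j hj => by
    rw [← repairDownload_update (y := ⟨r, hr⟩)]
    exact hdl j hj u hu _

theorem IsCodeword.eq_tailSum_of_repairDownload_eq_zero (hlam : Injective2 lam)
    (hc : IsCodeword k s m lam c) {R Fs : Finset (Fin n)} (hdisj : Disjoint Fs R)
    (hR : k + s ≤ #R + 1) (hsm : s ≤ m) {c₀ : F} (hc₀' : 1 + c₀ ≠ 0)
    (hdl : ∀ j ∈ R, ∀ u ∈ Fs, ∀ a, repairDownload m c₀ lam u (c j) a = 0)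
    {u : Fin n} (hu : u ∈ Fs) ⦃r : ℕ⦄ (hr : r < s) (a : Fin n → Fin s) :
    c u (r + 1) a = tailSum m lam u (c u) a := by
  have hrel : ∀ r < s, (c u (r + 1) a - tailSum m lam u (c u) a) +
      c₀ * lam u (a u) ^ r * (c u 1 a - tailSum m lam u (c u) a) = 0 := fun r hr => by
    have := (hc.lineCombination_repairWeight_eq_zero hlam hdisj hR hdl hu hr a).1 (a u)
    rwa [update_eq_self, sum_repairWeight_mul hr hsm] at this
  have h1 : c u 1 a - tailSum m lam u (c u) a = 0 := by
    have := hrel 0 (NeZero.pos s)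
    rw [zero_add, pow_zero, mul_one, ← one_add_mul] at this
    exact (mul_eq_zero.1 this).resolve_left hc₀'
  simpa [h1, sub_eq_zero] using hrel r hr

theorem IsCodeword.tailSum_eq_of_repairDownload_eq_zero (hlam : Injective2 lam)
    (hc : IsCodeword k s m lam c) {R Fs : Finset (Fin n)} (hdisj : Disjoint Fs R)
    (hR : k + s ≤ #R + 1) (hsm : s ≤ m) {c₀ : F} (hc₀ : c₀ ≠ 0) (hc₀' : 1 + c₀ ≠ 0)
    (hdl : ∀ j ∈ R, ∀ u ∈ Fs, ∀ a, repairDownload m c₀ lam u (c j) a = 0)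
    {u u' : Fin n} (hu : u ∈ Fs) (hu' : u' ∈ Fs) (a : Fin n → Fin s) :
    tailSum m lam u (c u') a = tailSum m lam u' (c u') a := by
  obtain rfl | hne := eq_or_ne u u'
  · rfl
  set ξ : Fin s → F := fun x =>
    tailSum m lam u' (c u') (update a u x) - tailSum m lam u (c u') (update a u x)
  have own := hc.eq_tailSum_of_repairDownload_eq_zero hlam hdisj hR hsm hc₀' hdl hu'
  have hξ : ∀ r < s, ∑ x, (1 + c₀ * lam u x ^ r) * ξ x = 0 := fun r hr => by
    have hu'R : u' ∉ insert u R := by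
      simp [hne.symm, disjoint_left.1 hdisj hu']
    rw [← (hc.lineCombination_repairWeight_eq_zero hlam hdisj hR hdl hu hr a).2 u' hu'R]
    refine sum_congr rfl fun x _ => ?_
    have own0 := own (NeZero.pos s) (update a u x)
    rw [zero_add] at own0
    rw [sum_repairWeight_mul hr hsm, own hr, own0]
    ring
  have hsum : ∑ x, ξ x = 0 := by
    have := hξ 0 (NeZero.pos s)
    simp only [pow_zero, mul_one, ← mul_sum] at this
    exact (mul_eq_zero.1 this).resolve_left hc₀'
  have hpow : ∀ r < Fintype.card (Fin s), ∑ x, lam u x ^ r * ξ x = 0 := fun r hr => by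
    rw [Fintype.card_fin] at hr
    have := hξ r hr
    simp only [add_mul, one_mul, sum_add_distrib, hsum, zero_add, mul_assoc, ← mul_sum] at this
    exact (mul_eq_zero.1 this).resolve_left hc₀
  have := congrFun (eq_zero_of_forall_lt_card_sum_pow_mul_eq_zero (hlam.right u) hpow) (a u)
  simpa [ξ, sub_eq_zero, eq_comm] using this

theorem IsCodeword.eq_zero_of_mem_Ioc_of_repairDownload_eq_zero (hlam : Injective2 lam)
    (hc : IsCodeword k s m lam c) {R Fs : Finset (Fin n)} (hdisj : Disjoint Fs R)
    (hR : k + s ≤ #R + 1) (hm : m < s + #Fs) {c₀ : F} (hc₀ : c₀ ≠ 0) (hc₀' : 1 + c₀ ≠ 0)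
    (hdl : ∀ j ∈ R, ∀ u ∈ Fs, ∀ a, repairDownload m c₀ lam u (c j) a = 0)
    {u : Fin n} (hu : u ∈ Fs) ⦃b : ℕ⦄ (hb : b ∈ Ioc s m) (a : Fin n → Fin s) : c u b a = 0 := by
  have hsm : s ≤ m := (mem_Ioc.1 hb).1.le.trans (mem_Ioc.1 hb).2
  refine eq_zero_of_forall_sum_mul_pow_eq_const (x := fun v : Fs => lam v 0)
    ((hlam.left 0).comp Subtype.val_injective) (S := Ioc s m) (e := (· - s))
    (fun b hb b' hb' h => by simp only [coe_Ioc, Set.mem_Ioc] at hb hb' h; omega)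
    (fun b hb => by simp only [mem_Ioc] at hb; omega)
    (fun b hb => by simp only [mem_Ioc, Fintype.card_coe] at hb ⊢; omega)
    (g := (c u · a)) (K := tailSum m lam u (c u) a) (fun v => ?_) b hb
  rw [← hc.tailSum_eq_of_repairDownload_eq_zero hlam hdisj hR hsm hc₀ hc₀' hdl v.2 hu]
  simp only [tailSum, mul_comm]

theorem IsCodeword.eq_zero_of_repairDownload_eq_zero (hlam : Injective2 lam)
    (hc : IsCodeword k s m lam c) {R Fs : Finset (Fin n)} (hdisj : Disjoint Fs R)
    (hR : k + s ≤ #R + 1) (hsm : s ≤ m) (hm : m < s + #Fs) {c₀ : F} (hc₀ : c₀ ≠ 0)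
    (hc₀' : 1 + c₀ ≠ 0) (hdl : ∀ j ∈ R, ∀ u ∈ Fs, ∀ a, repairDownload m c₀ lam u (c j) a = 0)
    {u : Fin n} (hu : u ∈ Fs) {b : ℕ} (hb : b ∈ Icc 1 m) (a : Fin n → Fin s) : c u b a = 0 := by
  have tail := hc.eq_zero_of_mem_Ioc_of_repairDownload_eq_zero hlam hdisj hR hm hc₀ hc₀' hdl hu
  rw [mem_Icc] at hb
  by_cases hbs : s < b
  · exact tail (mem_Ioc.2 ⟨hbs, hb.2⟩) a
  obtain ⟨r, rfl⟩ : ∃ r, b = r + 1 := ⟨b - 1, by omega⟩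
  rw [hc.eq_tailSum_of_repairDownload_eq_zero hlam hdisj hR hsm hc₀' hdl hu (by omega) a, tailSum]
  exact sum_eq_zero fun b' hb' => by rw [tail hb' a, mul_zero]

theorem IsCodeword.eq_of_repairDownload_eq (hlam : Injective2 lam)
    (hc : IsCodeword k s m lam c) (hc' : IsCodeword k s m lam c') {R Fs : Finset (Fin n)}
    (hdisj : Disjoint Fs R) (hR : k + s ≤ #R + 1) (hsm : s ≤ m) (hm : m < s + #Fs) {c₀ : F}
    (hc₀ : c₀ ≠ 0) (hc₀' : 1 + c₀ ≠ 0)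
    (hdl : ∀ j ∈ R, ∀ u ∈ Fs, repairDownload m c₀ lam u (c j) = repairDownload m c₀ lam u (c' j))
    {u : Fin n} (hu : u ∈ Fs) {b : ℕ} (hb : b ∈ Icc 1 m) (a : Fin n → Fin s) :
    c u b a = c' u b a :=
  sub_eq_zero.1 <| (hc.sub_s15 hc').eq_zero_of_repairDownload_eq_zero hlam hdisj hR hsm hm hc₀ hc₀'
    (fun j hj v hv a => by simp [repairDownload_sub, hdl j hj v hv]) hu hb a

end RepairCode

/-- `C(n,k,s,m,λ)` achieves the optimal repair bandwidth under
the centralized model, where `h ≥ 2`, `s ≥ 1`, `d := k+s-1`, `m := s+h-1` and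
`h + d ≤ n`.  For any `h` failed nodes `Fs` and any `d` helper nodes `Rs`
there exist download functions `φ j : N → M^h` (each helper `j ∈ Rs` transmits
`h` messages, i.e. an element of `Fin h → ((Fin n → Fin s) → F) ≅ F^(h·s^n)`)
and a recovery function `ρ` such that all failed nodes recover all of their
coordinates `(b,a)`, `b ∈ {1,…,s+h-1}`.  The total download, `h·d·s^n` field
symbols, meets the centralized cut-set bound with equality. -/
theorem stmt_15 {F : Type*} [Field F] (n k h s : ℕ) [NeZero s]
    (hk : 1 ≤ k) (hh : 2 ≤ h) (hn : h + (k + s - 1) ≤ n)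
    (lam : Fin n → Fin s → F)
    (hlam : Function.Injective fun p : Fin n × Fin s => lam p.1 p.2)
    (Fs Rs : Finset (Fin n)) (hdisj : Disjoint Fs Rs)
    (hFcard : Fs.card = h) (hRcard : Rs.card = k + s - 1) :
    ∃ (φ : Fin n → (ℕ → (Fin n → Fin s) → F) → (Fin h → (Fin n → Fin s) → F))
      (ρ : ({j // j ∈ Rs} → Fin h → (Fin n → Fin s) → F) →
           ({u // u ∈ Fs} → ℕ → (Fin n → Fin s) → F)),
      ∀ c : Fin n → ℕ → (Fin n → Fin s) → F, IsCodeword k s (s + h - 1) lam c →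
        ∀ u : {u // u ∈ Fs}, ∀ b ∈ Finset.Icc 1 (s + h - 1), ∀ a : Fin n → Fin s,
          ρ (fun j => φ j.1 (c j.1)) u b a = c u.1 b a := by
  have hs := NeZero.pos s
  obtain ⟨c₀, hc₀, hc₀'⟩ := exists_ne_zero_one_add_ne_zero hlam <| by
    rw [Fintype.card_prod, Fintype.card_fin, Fintype.card_fin]
    exact (show 3 ≤ n by omega).trans (Nat.le_mul_of_pos_right n hs)
  let e := Fs.equivFinOfCardEq hFcard
  let φ : Fin n → (ℕ → (Fin n → Fin s) → F) → Fin h → (Fin n → Fin s) → F :=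
    fun _ f q => repairDownload (s + h - 1) c₀ lam (e.symm q) f
  -- `ρ` decodes to any codeword with the received downloads; all of them agree on `Fs`.
  refine ⟨φ, fun D u => Classical.epsilon
    (fun c' => IsCodeword k s (s + h - 1) lam c' ∧ ∀ j : Rs, φ j (c' j) = D j) u, ?_⟩
  intro c hc u b hb a
  obtain ⟨hc', hD⟩ := Classical.epsilon_spec (p := fun c' => IsCodeword k s (s + h - 1) lam c' ∧
    ∀ j : Rs, φ j (c' j) = φ j (c j)) ⟨c, hc, fun _ => rfl⟩
  have hlam' : Injective2 lam := fun i j x y h => Prod.ext_iff.1 (@hlam (i, x) (j, y) h)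
  refine hc'.eq_of_repairDownload_eq hlam' hc hdisj
    (show k + s ≤ #Rs + 1 by omega) (by omega) (by omega) hc₀ hc₀' (fun j hj v hv => ?_)
    u.2 hb a
  simpa [φ] using congrFun (hD ⟨j, hj⟩) (e ⟨v, hv⟩)
end
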